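/- Let χ ∈ span{1, x, y, x²−y²} on the rectangle Q = [0,h]×[0,k]. If all four edge averages of χ are zero, then χ = 0. Consequently the integral mean of χ over Q is a linear combination of its four edge averages, with coefficients depending only on h and k. -/

import Mathlib

open MeasureTheory

/-- The Rannacher–Turek shape function `a + b x + c y + d (x² − y²)`. -/
noncomputable def rtphi (a b c d x y : ℝ) : ℝ := a + b*x + c*y + d*(x^2 - y^2)

/-- Edge averages of `rtphi a b c d` over the four edges (bottom, right, top,
left) of `Q = [0,h]×[0,k]`. -/
noncomputable def rtEdgeAvg (h k a b c d : ℝ) : Fin 4 → ℝ :=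
  ![(1/h) * ∫ t in (0:ℝ)..h, rtphi a b c d t 0,
    (1/k) * ∫ t in (0:ℝ)..k, rtphi a b c d h t,
    (1/h) * ∫ t in (0:ℝ)..h, rtphi a b c d t k,
    (1/k) * ∫ t in (0:ℝ)..k, rtphi a b c d 0 t]

/-!
Every integral involved is that of a quadratic polynomial in one variable, so the four edge
averages and the mean of `a + b x + c y + d (x² − y²)` are explicit linear forms in
`(a, b, c, d)`. Opposite edges differ by `b h + d h²` and `c k − d k²`, and the alternating sum
bottom − right + top − left equals `−d (h² + k²) / 3`; so vanishing edge averages force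
`d = 0`, then `b = c = 0`, then `a = 0`.
-/

lemma integral_quadratic (L p q r : ℝ) :
    ∫ t in (0:ℝ)..L, (p + q*t + r*t^2) = p*L + q*L^2/2 + r*L^3/3 := by
  rw [intervalIntegral.integral_add, intervalIntegral.integral_add,
    intervalIntegral.integral_const, intervalIntegral.integral_const_mul,
    intervalIntegral.integral_const_mul, integral_id, integral_pow] <;>
    try exact Continuous.intervalIntegrable (by fun_prop) _ _
  rw [smul_eq_mul]
  ring

lemma integral_rtphi_fst (a b c d L y : ℝ) :
    ∫ t in (0:ℝ)..L, rtphi a b c d t y = (a + c*y - d*y^2)*L + b*L^2/2 + d*L^3/3 := by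
  rw [← integral_quadratic]
  congr 1
  funext t
  unfold rtphi
  ring

lemma integral_rtphi_snd (a b c d x L : ℝ) :
    ∫ t in (0:ℝ)..L, rtphi a b c d x t = (a + b*x + d*x^2)*L + c*L^2/2 - d*L^3/3 := by
  convert integral_quadratic L (a + b*x + d*x^2) c (-d) using 1
  · congr 1
    funext t
    unfold rtphi
    ring
  · ring

lemma rtEdgeAvg_eq {h k : ℝ} (hh : h ≠ 0) (hk : k ≠ 0) (a b c d : ℝ) :
    rtEdgeAvg h k a b c d =
      ![a + b*h/2 + d*h^2/3,
        a + b*h + d*h^2 + c*k/2 - d*k^2/3,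
        a + c*k - d*k^2 + b*h/2 + d*h^2/3,
        a + c*k/2 - d*k^2/3] := by
  ext i
  fin_cases i <;> simp [rtEdgeAvg, integral_rtphi_fst, integral_rtphi_snd] <;> field_simp

lemma rtMean_eq {h k : ℝ} (hh : h ≠ 0) (hk : k ≠ 0) (a b c d : ℝ) :
    (1/(h*k)) * ∫ x in (0:ℝ)..h, ∫ y in (0:ℝ)..k, rtphi a b c d x y
      = a + b*h/2 + c*k/2 + d*(h^2 - k^2)/3 := by
  have hQ : ∫ x in (0:ℝ)..h, ∫ y in (0:ℝ)..k, rtphi a b c d x y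
      = (a*k + c*k^2/2 - d*k^3/3)*h + (b*k)*h^2/2 + (d*k)*h^3/3 := by
    simp only [integral_rtphi_snd]
    rw [← integral_quadratic]
    congr 1
    funext x
    ring
  rw [hQ]
  field_simp
  ring

lemma rtphi_coeffs_eq_zero_of_rtEdgeAvg_eq_zero {h k a b c d : ℝ} (hh : h ≠ 0) (hk : k ≠ 0)
    (hE : ∀ i, rtEdgeAvg h k a b c d i = 0) : a = 0 ∧ b = 0 ∧ c = 0 ∧ d = 0 := by
  simp only [rtEdgeAvg_eq hh hk] at hE
  have bottom := hE 0
  have right := hE 1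
  have top := hE 2
  have left := hE 3
  simp only [Matrix.cons_val] at bottom right top left
  have hd : d = 0 := by
    have : d * (h^2 + k^2) = 0 := by
      linear_combination 3 * (right + left - bottom - top)
    exact (mul_eq_zero.mp this).resolve_right (by positivity)
  subst hd
  have hb : b = 0 := by
    have : b * h = 0 := by linear_combination right - left
    exact (mul_eq_zero.mp this).resolve_right hh
  have hc : c = 0 := by
    have : c * k = 0 := by linear_combination top - bottom
    exact (mul_eq_zero.mp this).resolve_right hk
  subst hb hc
  exact ⟨by linear_combination bottom, rfl, rfl, rfl⟩

/-- If `χ ∈ span{1,x,y,x²−y²}` has all four edge averages on `Q = [0,h]×[0,k]`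
equal to zero, then `χ = 0`; consequently the mean of `χ` over `Q` is a linear
combination of its four edge averages with weights depending only on `h` and `k`. -/
theorem stmt19 (h k : ℝ) (hh : 0 < h) (hk : 0 < k) :
    (∀ a b c d : ℝ, (∀ i : Fin 4, rtEdgeAvg h k a b c d i = 0) →
        ∀ x y : ℝ, rtphi a b c d x y = 0)
    ∧ ∃ w : Fin 4 → ℝ, ∀ a b c d : ℝ,
        (1/(h*k)) * ∫ x in (0:ℝ)..h, ∫ y in (0:ℝ)..k, rtphi a b c d x y
          = ∑ i : Fin 4, w i * rtEdgeAvg h k a b c d i := by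
  refine ⟨fun a b c d hE x y => ?_, ?_⟩
  · obtain ⟨rfl, rfl, rfl, rfl⟩ := rtphi_coeffs_eq_zero_of_rtEdgeAvg_eq_zero hh.ne' hk.ne' hE
    simp [rtphi]
  -- Weights `α` on the horizontal edges and `β` on the vertical ones: `α + β = 1/2` matches the
  -- coefficients of `a`, `b`, `c`, and the coefficient of `d` then forces `α : β = h² : k²`.
  refine ⟨![h^2/(2*(h^2+k^2)), k^2/(2*(h^2+k^2)), h^2/(2*(h^2+k^2)), k^2/(2*(h^2+k^2))],
    fun a b c d => ?_⟩
  rw [rtMean_eq hh.ne' hk.ne', rtEdgeAvg_eq hh.ne' hk.ne']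
  simp only [Fin.sum_univ_four, Matrix.cons_val]
  field_simp
  ring
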